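/- arXiv:2311.13202 — 3 statements merged into one kernel-verified Lean document; each statement's English description precedes it below -/
import Mathlib

section
/- (Upper bound part of the FSBP of RBSS.) Let Z = (X, y) be a sample of size n with p > 1 covariates, let t ≥ 1 and t ≤ h ≤ n. Then the RBSS estimator breaks down when m = n − h + 1 observations are replaced: for every M > 0 there exists a contaminated sample Z̃ obtained by replacing exactly n − h + 1 rows of Z by a common point (x_c, y_c) with x_c = (τ, 0, …, 0) and y_c = γτ for suitable γ, τ > 0, such that every minimizer β̃ of the RBSS problem with parameters (t,h) on Z̃ satisfies ‖β̃‖₂ > M. -/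
open Finset

noncomputable section

/-- ℓ₀ "norm": the number of nonzero entries of a vector. -/
def l0 {p : ℕ} (β : Fin p → ℝ) : ℕ := (Finset.univ.filter fun j => β j ≠ 0).card

/-- Squared residual of observation `i` for coefficient vector `β`. -/
def sqResid {n p : ℕ} (X : Fin n → Fin p → ℝ) (y : Fin n → ℝ) (β : Fin p → ℝ)
    (i : Fin n) : ℝ :=
  (y i - ∑ j, X i j * β j) ^ 2

/-- Feasibility for the RBSS problem with parameters `(t, h)`. -/
def rbssFeasible {n p : ℕ} (t h : ℕ) (β : Fin p → ℝ) (I : Finset (Fin n)) : Prop :=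
  l0 β ≤ t ∧ h ≤ I.card

/-- RBSS objective function. -/
def rbssObj {n p : ℕ} (X : Fin n → Fin p → ℝ) (y : Fin n → ℝ) (β : Fin p → ℝ)
    (I : Finset (Fin n)) : ℝ :=
  ∑ i ∈ I, sqResid X y β i

/-- Optimality for the RBSS problem with parameters `(t, h)`. -/
def rbssOptimal {n p : ℕ} (X : Fin n → Fin p → ℝ) (y : Fin n → ℝ) (t h : ℕ)
    (β : Fin p → ℝ) (I : Finset (Fin n)) : Prop :=
  rbssFeasible t h β I ∧
    ∀ (β' : Fin p → ℝ) (I' : Finset (Fin n)),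
      rbssFeasible t h β' I' → rbssObj X y β I ≤ rbssObj X y β' I'

/-- Euclidean (ℓ₂) norm of a coefficient vector. -/
def l2norm {p : ℕ} (β : Fin p → ℝ) : ℝ := Real.sqrt (∑ j, (β j) ^ 2)

/-- **upper bound part of the FSBP of RBSS.** The RBSS estimator breaks down
when `m = n − h + 1` observations are replaced: for every `M > 0` there is a contaminated
sample obtained by replacing exactly `n − h + 1` rows of `(X, y)` by a common point
`(x_c, y_c)` with `x_c = (τ, 0, …, 0)` and `y_c = γτ` for suitable `γ, τ > 0`, such that
every RBSS minimizer on the contaminated sample has ℓ₂ norm exceeding `M`. -/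
theorem rbss_upper_bound_breakdown {n p : ℕ} (hn : 0 < n) (hp : 1 < p)
    (X : Fin n → Fin p → ℝ) (y : Fin n → ℝ) (t h : ℕ)
    (ht : 1 ≤ t) (hth : t ≤ h) (hhn : h ≤ n) :
    ∀ M : ℝ, 0 < M →
      ∃ (γ τ : ℝ) (S : Finset (Fin n)) (X' : Fin n → Fin p → ℝ) (y' : Fin n → ℝ),
        0 < γ ∧ 0 < τ ∧ S.card = n - h + 1 ∧
        (∀ i ∈ S, (∀ j : Fin p, X' i j = if (j : ℕ) = 0 then τ else 0) ∧ y' i = γ * τ) ∧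
        (∀ i ∉ S, X' i = X i ∧ y' i = y i) ∧
        ∀ (β : Fin p → ℝ) (I' : Finset (Fin n)),
          rbssOptimal X' y' t h β I' → M < l2norm β := by
  intro M hM
  have hmn : n - h + 1 ≤ n := by omega
  obtain ⟨S, -, hScard⟩ := Finset.exists_subset_card_eq (s := (Finset.univ : Finset (Fin n)))
    (n := n - h + 1) (by simpa using hmn)
  set j0 : Fin p := ⟨0, by omega⟩ with hj0
  set γ : ℝ := M + 1 with hγ
  have hγpos : 0 < γ := by positivity
  set V : ℝ := ∑ i ∈ Sᶜ, (y i - γ * X i j0) ^ 2 with hV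
  have hVnn : 0 ≤ V := Finset.sum_nonneg fun i _ => sq_nonneg _
  set τ : ℝ := Real.sqrt (V + 1) with hτ
  have hτpos : 0 < τ := Real.sqrt_pos.2 (by linarith)
  have hτsq : τ ^ 2 = V + 1 := Real.sq_sqrt (by linarith)
  set X' : Fin n → Fin p → ℝ :=
    fun i => if i ∈ S then (fun j => if (j : ℕ) = 0 then τ else 0) else X i with hX'
  set y' : Fin n → ℝ := fun i => if i ∈ S then γ * τ else y i with hy'
  refine ⟨γ, τ, S, X', y', hγpos, hτpos, hScard, ?_, ?_, ?_⟩
  · intro i hi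
    constructor
    · intro j; simp [hX', hi]
    · simp [hy', hi]
  · intro i hi
    constructor
    · simp [hX', hi]
    · simp [hy', hi]
  · intro β I hopt
    by_contra hle
    push_neg at hle
    -- key sum lemma
    have hsum : ∀ (c : ℝ) (b : Fin p → ℝ),
        (∑ j : Fin p, (if (j : ℕ) = 0 then c else 0) * b j) = c * b j0 := by
      intro c b
      rw [Finset.sum_eq_single j0]
      · simp [hj0]
      · intro j _ hj
        have : (j : ℕ) ≠ 0 := by
          intro hc
          exact hj (by apply Fin.ext; simpa [hj0] using hc)
        simp [this]
      · simp
    -- candidate β*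
    set βs : Fin p → ℝ := fun j => if (j : ℕ) = 0 then γ else 0 with hβs
    have hβsl0 : l0 βs = 1 := by
      have : (Finset.univ.filter fun j => βs j ≠ 0) = {j0} := by
        ext j
        constructor
        · intro hj
          simp only [Finset.mem_filter, hβs] at hj
          rcases hj with ⟨-, hj⟩
          by_cases hj' : (j : ℕ) = 0
          · have : j = j0 := by apply Fin.ext; simpa [hj0] using hj'
            simp [this]
          · simp [hj'] at hj
        · intro hj
          simp only [Finset.mem_singleton] at hj
          subst hj
          simp [hβs, hj0]
          linarith
      rw [l0, this, Finset.card_singleton]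
    have hfeas : rbssFeasible t h βs (Finset.univ : Finset (Fin n)) := by
      refine ⟨by rw [hβsl0]; exact ht, ?_⟩
      simpa using hhn
    -- objective at candidate equals V
    have hobjs : rbssObj X' y' βs Finset.univ = V := by
      rw [rbssObj, ← Finset.sum_add_sum_compl S]
      have h1 : ∑ i ∈ S, sqResid X' y' βs i = 0 := by
        apply Finset.sum_eq_zero
        intro i hi
        have hXi : ∑ j, X' i j * βs j = τ * γ := by
          simp only [hX', if_pos hi]
          exact hsum τ βs
        rw [sqResid, hXi]
        simp only [hy', if_pos hi]
        ring
      have h2 : ∑ i ∈ Sᶜ, sqResid X' y' βs i = V := by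
        apply Finset.sum_congr rfl
        intro i hi
        have hiS : i ∉ S := Finset.mem_compl.1 hi
        have hXi : ∑ j, X i j * βs j = X i j0 * γ := by
          rw [Finset.sum_eq_single j0]
          · simp [hβs, hj0]
          · intro j _ hj
            have : (j : ℕ) ≠ 0 := fun hc => hj (Fin.ext hc)
            simp [hβs, this]
          · simp
        rw [sqResid]
        simp only [hX', hy', if_neg hiS]
        rw [hXi]
        ring
      rw [h1, h2]; ring
    -- I contains a contaminated point
    have hScompl : Sᶜ.card = h - 1 := by
      rw [Finset.card_compl, hScard, Fintype.card_fin]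
      omega
    obtain ⟨i0, hi0I, hi0S⟩ : ∃ i0, i0 ∈ I ∧ i0 ∈ S := by
      by_contra hc
      push_neg at hc
      have hIsub : I ⊆ Sᶜ := fun i hi => Finset.mem_compl.2 (hc i hi)
      have := Finset.card_le_card hIsub
      have hIcard := hopt.1.2
      omega
    -- lower bound on the objective
    have hβ0 : β j0 ≤ M := by
      have h1 : |β j0| ≤ l2norm β := by
        rw [l2norm, ← Real.sqrt_sq_eq_abs]
        apply Real.sqrt_le_sqrt
        exact Finset.single_le_sum (fun j _ => sq_nonneg (β j)) (Finset.mem_univ j0)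
      calc β j0 ≤ |β j0| := le_abs_self _
        _ ≤ l2norm β := h1
        _ ≤ M := hle
    have hres : V + 1 ≤ sqResid X' y' β i0 := by
      have hXi : ∑ j, X' i0 j * β j = τ * β j0 := by
        simp only [hX', if_pos hi0S]
        exact hsum τ β
      have : sqResid X' y' β i0 = τ ^ 2 * (γ - β j0) ^ 2 := by
        rw [sqResid, hXi]
        simp only [hy', if_pos hi0S]
        ring
      rw [this, hτsq]
      have h1 : 1 ≤ γ - β j0 := by rw [hγ]; linarith
      have h2 : (1 : ℝ) ≤ (γ - β j0) ^ 2 := by nlinarith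
      nlinarith
    have hlow : V + 1 ≤ rbssObj X' y' β I := by
      refine le_trans hres ?_
      exact Finset.single_le_sum (f := fun i => sqResid X' y' β i) (fun i _ => sq_nonneg _) hi0I
    have hup : rbssObj X' y' β I ≤ V := by
      have := hopt.2 βs Finset.univ hfeas
      rwa [hobjs] at this
    linarith

end
end

section
/- (Upper bound part of the FSBP of RMSS.) Let Z = (X, y) be a sample of size n with p > 1 covariates, let G < p, t ≥ 1, 1 ≤ u ≤ G, and t ≤ h ≤ n. Then every coefficient vector of the RMSS estimator breaks down when m = n − h + 1 observations are replaced: for every M > 0 there exists a contaminated sample Z̃ obtained by replacing exactly n − h + 1 rows of Z by a common point (x_c, y_c) with x_c = (τ, τ, …, τ) and y_c = γτ for suitable γ, τ > 0, such that every optimal RMSS solution (β̃^1,…,β̃^G) with parameters (t,u,h) on Z̃ satisfies ‖β̃^g‖₂ > M for every g ∈ {1,…,G}. -/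
open Finset

noncomputable section

/-- Feasibility for the RMSS problem with parameters `(t, u, h)`. -/
def rmssFeasible {n p G : ℕ} (t u h : ℕ) (B : Fin G → Fin p → ℝ)
    (I : Fin G → Finset (Fin n)) : Prop :=
  (∀ g, l0 (B g) ≤ t) ∧ (∀ j : Fin p, l0 (fun g => B g j) ≤ u) ∧ (∀ g, h ≤ (I g).card)

/-- RMSS objective function. -/
def rmssObj {n p G : ℕ} (X : Fin n → Fin p → ℝ) (y : Fin n → ℝ)
    (B : Fin G → Fin p → ℝ) (I : Fin G → Finset (Fin n)) : ℝ :=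
  ∑ g, ∑ i ∈ I g, sqResid X y (B g) i

/-- Optimality for the RMSS problem with parameters `(t, u, h)`. -/
def rmssOptimal {n p G : ℕ} (X : Fin n → Fin p → ℝ) (y : Fin n → ℝ) (t u h : ℕ)
    (B : Fin G → Fin p → ℝ) (I : Fin G → Finset (Fin n)) : Prop :=
  rmssFeasible t u h B I ∧
    ∀ (B' : Fin G → Fin p → ℝ) (I' : Fin G → Finset (Fin n)),
      rmssFeasible t u h B' I' → rmssObj X y B I ≤ rmssObj X y B' I'

/-- Euclidean (ℓ₂) norm of a coefficient vector. -/
def enorm {p : ℕ} (β : Fin p → ℝ) : ℝ := Real.sqrt (∑ j, (β j) ^ 2)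

set_option maxHeartbeats 1000000 in
/-- **upper bound part of the FSBP of RMSS.** With `G < p`, `t ≥ 1`,
`1 ≤ u ≤ G` and `t ≤ h ≤ n`, every coefficient vector of the RMSS estimator breaks down
when `m = n − h + 1` observations are replaced: for every `M > 0` there is a contaminated
sample obtained by replacing exactly `n − h + 1` rows of `(X, y)` by a common point
`(x_c, y_c)` with `x_c = (τ, τ, …, τ)` and `y_c = γτ` for suitable `γ, τ > 0`, such that
every optimal RMSS solution on the contaminated sample satisfies `‖β̃^g‖₂ > M` for every
`g`. -/
theorem rmss_upper_bound_breakdown {n p G : ℕ} (hn : 0 < n) (hp : 1 < p) (hGp : G < p)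
    (X : Fin n → Fin p → ℝ) (y : Fin n → ℝ) (t u h : ℕ)
    (ht : 1 ≤ t) (hu1 : 1 ≤ u) (huG : u ≤ G) (hth : t ≤ h) (hhn : h ≤ n) :
    ∀ M : ℝ, 0 < M →
      ∃ (γ τ : ℝ) (S : Finset (Fin n)) (X' : Fin n → Fin p → ℝ) (y' : Fin n → ℝ),
        0 < γ ∧ 0 < τ ∧ S.card = n - h + 1 ∧
        (∀ i ∈ S, (∀ j : Fin p, X' i j = τ) ∧ y' i = γ * τ) ∧
        (∀ i ∉ S, X' i = X i ∧ y' i = y i) ∧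
        ∀ (B : Fin G → Fin p → ℝ) (I' : Fin G → Finset (Fin n)),
          rmssOptimal X' y' t u h B I' → ∀ g, M < _root_.enorm (B g) := by
  intro M hM
  have hγ : (0:ℝ) < p * M + 1 := by positivity
  set γ : ℝ := p * M + 1 with hγdef
  have hGle : G ≤ p := hGp.le
  set e : Fin G → Fin p := fun g => Fin.castLE hGle g with he
  set D : ℝ := ∑ g : Fin G, ∑ i : Fin n, (y i - X i (e g) * γ)^2 with hD
  have hD0 : 0 ≤ D := by positivity
  set τ : ℝ := Real.sqrt D + 1 with hτdef
  have hτ : 0 < τ := by positivity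
  have hτ2 : D < τ^2 := by
    have h1 : Real.sqrt D ^ 2 = D := Real.sq_sqrt hD0
    nlinarith [Real.sqrt_nonneg D]
  have hh1 : 1 ≤ h := le_trans ht hth
  obtain ⟨S, hSsub, hScard⟩ := Finset.exists_subset_card_eq
    (show n - h + 1 ≤ (Finset.univ : Finset (Fin n)).card by simp; omega)
  set X' : Fin n → Fin p → ℝ := fun i j => if i ∈ S then τ else X i j with hX'
  set y' : Fin n → ℝ := fun i => if i ∈ S then γ * τ else y i with hy'
  refine ⟨γ, τ, S, X', y', hγ, hτ, hScard, ?_, ?_, ?_⟩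
  · intro i hi; exact ⟨fun j => by simp [hX', hi], by simp [hy', hi]⟩
  · intro i hi; exact ⟨funext fun j => by simp [hX', hi], by simp [hy', hi]⟩
  · intro B I hopt g0
    by_contra hle
    push_neg at hle
    -- From enorm (B g0) ≤ M, every coordinate is ≤ M.
    have hs2 : ∑ j, (B g0 j)^2 ≤ M^2 := by
      have h1 : Real.sqrt (∑ j, (B g0 j)^2) ≤ M := hle
      have h2 : (0:ℝ) ≤ ∑ j, (B g0 j)^2 := by positivity
      nlinarith [Real.sq_sqrt h2, Real.sqrt_nonneg (∑ j, (B g0 j)^2)]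
    have hcoord : ∀ j, B g0 j ≤ M := by
      intro j
      have h1 : (B g0 j)^2 ≤ ∑ j', (B g0 j')^2 :=
        Finset.single_le_sum (f := fun j' => (B g0 j')^2) (fun j' _ => sq_nonneg _)
          (Finset.mem_univ j)
      nlinarith
    have hsum : ∑ j, B g0 j ≤ p * M := by
      calc ∑ j, B g0 j ≤ ∑ _j : Fin p, M := Finset.sum_le_sum (fun j _ => hcoord j)
        _ = p * M := by simp [mul_comm]
    -- the index set of group g0 meets S
    have hinter : 1 ≤ (I g0 ∩ S).card := by
      have h1 : h ≤ (I g0).card := hopt.1.2.2 g0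
      have h2 : (I g0 ∪ S).card ≤ n := by
        simpa using Finset.card_le_univ (I g0 ∪ S)
      have h3 := Finset.card_inter_add_card_union (I g0) S
      omega
    obtain ⟨i₀, hi₀⟩ := Finset.card_pos.mp (by omega : 0 < (I g0 ∩ S).card)
    have hi₀I : i₀ ∈ I g0 := (Finset.mem_inter.mp hi₀).1
    have hi₀S : i₀ ∈ S := (Finset.mem_inter.mp hi₀).2
    -- lower bound on the objective of (B, I)
    have hresid : τ^2 ≤ sqResid X' y' (B g0) i₀ := by
      have hx : ∀ j, X' i₀ j = τ := fun j => by simp [hX', hi₀S]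
      have hyv : y' i₀ = γ * τ := by simp [hy', hi₀S]
      have hval : sqResid X' y' (B g0) i₀ = (γ * τ - τ * ∑ j, B g0 j)^2 := by
        simp only [sqResid, hyv]
        rw [Finset.mul_sum]
        congr 2
        exact Finset.sum_congr rfl fun j _ => by rw [hx j]
      rw [hval]
      have hγs : 1 ≤ γ - ∑ j, B g0 j := by
        have : (p:ℝ) * M + 1 - ∑ j, B g0 j ≥ 1 := by linarith
        simpa [hγdef] using this
      have h1 : 1 ≤ (γ - ∑ j, B g0 j)^2 := by nlinarith
      calc τ^2 = τ^2 * 1 := by ring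
        _ ≤ τ^2 * (γ - ∑ j, B g0 j)^2 := by
            exact mul_le_mul_of_nonneg_left h1 (sq_nonneg τ)
        _ = (γ * τ - τ * ∑ j, B g0 j)^2 := by ring
    have hlower : τ^2 ≤ rmssObj X' y' B I := by
      have h1 : sqResid X' y' (B g0) i₀ ≤ ∑ i ∈ I g0, sqResid X' y' (B g0) i :=
        Finset.single_le_sum (f := fun i => sqResid X' y' (B g0) i) (fun i _ => sq_nonneg _) hi₀I
      have h2 : ∑ i ∈ I g0, sqResid X' y' (B g0) i
          ≤ ∑ g, ∑ i ∈ I g, sqResid X' y' (B g) i :=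
        Finset.single_le_sum (f := fun g => ∑ i ∈ I g, sqResid X' y' (B g) i)
          (fun g _ => Finset.sum_nonneg fun i _ => sq_nonneg _) (Finset.mem_univ g0)
      have h3 : rmssObj X' y' B I = ∑ g, ∑ i ∈ I g, sqResid X' y' (B g) i := rfl
      linarith
    -- competitor
    obtain ⟨T, hTsub, hTcard⟩ := Finset.exists_subset_card_eq
      (show h ≤ (Finset.univ : Finset (Fin n)).card by simpa using hhn)
    set B' : Fin G → Fin p → ℝ := fun g j => if j = e g then γ else 0 with hB'
    have hfeas : rmssFeasible t u h B' (fun _ => T) := by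
      refine ⟨fun g => ?_, fun j => ?_, fun g => by simp [hTcard]⟩
      · have hset : (Finset.univ.filter fun j => B' g j ≠ 0) = {e g} := by
          ext j
          simp only [Finset.mem_filter, Finset.mem_univ, true_and, Finset.mem_singleton]
          by_cases hj : j = e g
          · simp [hB', hj, hγ.ne']
          · simp [hB', hj]
        simpa [l0, hset] using ht
      · refine le_trans ?_ hu1
        rw [l0, Finset.card_le_one]
        intro a ha b hb
        simp only [Finset.mem_filter, Finset.mem_univ, true_and, hB'] at ha hb
        have ha' : j = e a := by by_contra hc; simp [hc] at ha
        have hb' : j = e b := by by_contra hc; simp [hc] at hb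
        exact Fin.castLE_injective hGle (ha'.symm.trans hb')
    have hobj' : rmssObj X' y' B' (fun _ => T) ≤ D := by
      rw [rmssObj, hD]
      refine Finset.sum_le_sum fun g _ => ?_
      have hterm : ∀ i, sqResid X' y' (B' g) i ≤ (y i - X i (e g) * γ)^2 := by
        intro i
        have hinner : ∑ j, X' i j * B' g j = X' i (e g) * γ := by
          simp [hB', mul_ite, Finset.sum_ite_eq']
        rw [sqResid, hinner]
        by_cases hi : i ∈ S
        · have hyv : y' i = γ * τ := by simp [hy', hi]
          have hxv : X' i (e g) = τ := by simp [hX', hi]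
          rw [hyv, hxv]
          nlinarith [sq_nonneg (y i - X i (e g) * γ)]
        · have hyv : y' i = y i := by simp [hy', hi]
          have hxv : X' i (e g) = X i (e g) := by simp [hX', hi]
          rw [hyv, hxv]
      calc ∑ i ∈ T, sqResid X' y' (B' g) i
          ≤ ∑ i ∈ T, (y i - X i (e g) * γ)^2 :=
            Finset.sum_le_sum fun i _ => hterm i
        _ ≤ ∑ i : Fin n, (y i - X i (e g) * γ)^2 :=
            Finset.sum_le_sum_of_subset_of_nonneg hTsub (fun i _ _ => sq_nonneg _)
    have hcmp := hopt.2 B' (fun _ => T) hfeas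
    linarith

end
end

section
/- (Breakdown point of BSS.) Let Z = (X, y) be a sample of size n with p > 1 covariates, let t ≥ 1 with 2t ≤ n, and suppose the general position condition of Theorem 1 holds. Taking h = n in the RBSS problem (which reduces it to Best Subset Selection), the finite-sample breakdown point of any BSS coefficient estimator at Z equals 1/n; in particular, the BSS estimator is not resistant to even a single contaminated observation. -/
open Finset

noncomputable section

/-- Optimality for the BSS problem with parameter `t`: `β` minimizes `‖y − Xβ‖₂²`
subject to `‖β‖₀ ≤ t`. -/
def bssOptimal {n p : ℕ} (X : Fin n → Fin p → ℝ) (y : Fin n → ℝ) (t : ℕ)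
    (β : Fin p → ℝ) : Prop :=
  l0 β ≤ t ∧
    ∀ β' : Fin p → ℝ, l0 β' ≤ t →
      (∑ i, sqResid X y β i) ≤ ∑ i, sqResid X y β' i

/-- Euclidean (ℓ₂) norm of a coefficient vector. -/
def euclNorm {p : ℕ} (β : Fin p → ℝ) : ℝ := Real.sqrt (∑ j, (β j) ^ 2)

/-- `Corrupt m X y X' y'` : the dataset `(X', y')` is obtained from `(X, y)` by replacing
at most `m` of its rows (observations). -/
def Corrupt {n p : ℕ} (m : ℕ) (X : Fin n → Fin p → ℝ) (y : Fin n → ℝ)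
    (X' : Fin n → Fin p → ℝ) (y' : Fin n → ℝ) : Prop :=
  {i : Fin n | X' i ≠ X i ∨ y' i ≠ y i}.ncard ≤ m

/-- The estimator `T` breaks down at contamination level `m` at the sample `(X, y)`. -/
def BreaksAt {n p : ℕ} (T : (Fin n → Fin p → ℝ) → (Fin n → ℝ) → (Fin p → ℝ))
    (X : Fin n → Fin p → ℝ) (y : Fin n → ℝ) (m : ℕ) : Prop :=
  ∀ M : ℝ, ∃ (X' : Fin n → Fin p → ℝ) (y' : Fin n → ℝ),
    Corrupt m X y X' y' ∧ M < euclNorm (T X' y')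

/-- The finite-sample breakdown point of the estimator `T` at the sample `(X, y)`. -/
def fsbp {n p : ℕ} (T : (Fin n → Fin p → ℝ) → (Fin n → ℝ) → (Fin p → ℝ))
    (X : Fin n → Fin p → ℝ) (y : Fin n → ℝ) : ℝ :=
  (sInf {m : ℕ | 1 ≤ m ∧ m ≤ n ∧ BreaksAt T X y m} : ℕ) / n

/-- General position of all column-submatrices with between `t` and `q` columns. -/
def GeneralPosition {n p : ℕ} (X : Fin n → Fin p → ℝ) (t q : ℕ) : Prop :=
  ∀ K : Finset (Fin p), t ≤ K.card → K.card ≤ q →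
    ∀ S : Finset (Fin n), S.card = K.card →
      LinearIndependent ℝ (fun i : {i // i ∈ S} => fun j : {j // j ∈ K} => X i.1 j.1)

/-- **breakdown point of BSS.** Under the general position condition of
Theorem 1, with `t ≥ 1` and `2t ≤ n`, any estimator `T` mapping each dataset to a BSS
minimizer (i.e. the RBSS estimator with `h = n`) has finite-sample breakdown point `1/n`
at `(X, y)`: it is not resistant to even a single contaminated observation. -/
theorem fsbp_bss {n p : ℕ} (hn : 0 < n) (hp : 1 < p)
    (X : Fin n → Fin p → ℝ) (y : Fin n → ℝ) (t : ℕ)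
    (ht1 : 1 ≤ t) (ht : 2 * t ≤ n)
    (hGP : GeneralPosition X t (min (2 * t) p))
    (T : (Fin n → Fin p → ℝ) → (Fin n → ℝ) → (Fin p → ℝ))
    (hT : ∀ (X' : Fin n → Fin p → ℝ) (y' : Fin n → ℝ), bssOptimal X' y' t (T X' y')) :
    fsbp T X y = 1 / n := by
  have hp0 : 0 < p := by omega
  have hbreak : BreaksAt T X y 1 := by
    intro M
    set i0 : Fin n := ⟨0, hn⟩ with hi0
    set j0 : Fin p := ⟨0, hp0⟩ with hj0
    set A : ℝ := max M 0 + 1 with hA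
    set B : Fin p → ℝ := fun j => if j = j0 then A else 0 with hB
    set C : ℝ := ∑ i, (y i - ∑ j, X i j * B j) ^ 2 with hC
    have hCnn : 0 ≤ C := Finset.sum_nonneg fun i _ => sq_nonneg _
    set Y : ℝ := Real.sqrt C + 1 with hYdef
    have hsq : Real.sqrt C ^ 2 = C := Real.sq_sqrt hCnn
    have hYpos : 0 < Y := by positivity
    have hCY : C < Y ^ 2 := by nlinarith [Real.sqrt_nonneg C]
    set X' : Fin n → Fin p → ℝ :=
      fun i j => if i = i0 then (if j = j0 then Y else 0) else X i j with hX'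
    set y' : Fin n → ℝ := fun i => if i = i0 then Y * A else y i with hy'
    refine ⟨X', y', ?_, ?_⟩
    · have hsub : {i : Fin n | X' i ≠ X i ∨ y' i ≠ y i} ⊆ {i0} := by
        intro i hi
        by_contra h
        simp only [Set.mem_singleton_iff] at h
        simp [hX', hy', h, Set.mem_setOf_eq] at hi
      calc {i : Fin n | X' i ≠ X i ∨ y' i ≠ y i}.ncard
          ≤ ({i0} : Set (Fin n)).ncard :=
            Set.ncard_le_ncard hsub (Set.finite_singleton _)
        _ = 1 := Set.ncard_singleton _
    · set β := T X' y' with hβ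
      obtain ⟨hl0, hopt⟩ := hT X' y'
      have hl0B : l0 B ≤ t := by
        have hsub : (Finset.univ.filter fun j => B j ≠ 0) ⊆ {j0} := by
          intro j hj
          simp only [Finset.mem_filter] at hj
          simp only [Finset.mem_singleton]
          by_contra h
          exact hj.2 (by simp [hB, h])
        calc l0 B ≤ ({j0} : Finset (Fin p)).card := Finset.card_le_card hsub
          _ = 1 := Finset.card_singleton _
          _ ≤ t := ht1
      have hmin := hopt B hl0B
      -- residual of B at corrupted row is 0
      have hsum0 : (∑ j, X' i0 j * B j) = Y * A := by
        simp [hX', hB, ite_and, mul_ite, Finset.sum_ite_eq']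
      have hres0 : sqResid X' y' B i0 = 0 := by
        simp [sqResid, hy', hsum0]
      -- total residual of B is at most C
      have hupper : (∑ i, sqResid X' y' B i) ≤ C := by
        have hsplit : (∑ i ∈ Finset.univ.erase i0, sqResid X' y' B i) + sqResid X' y' B i0
            = ∑ i, sqResid X' y' B i := Finset.sum_erase_add _ _ (Finset.mem_univ i0)
        have heq : ∀ i ∈ Finset.univ.erase i0,
            sqResid X' y' B i = (y i - ∑ j, X i j * B j) ^ 2 := by
          intro i hi
          have hne : i ≠ i0 := (Finset.mem_erase.mp hi).1
          simp [sqResid, hX', hy', hne]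
        rw [← hsplit, hres0, add_zero, Finset.sum_congr rfl heq]
        exact Finset.sum_le_sum_of_subset_of_nonneg (Finset.subset_univ _)
          (fun i _ _ => sq_nonneg _)
      -- residual of β at corrupted row
      have hsumβ : (∑ j, X' i0 j * B j) = Y * A := hsum0
      have hsumβ' : (∑ j, X' i0 j * β j) = Y * β j0 := by
        simp [hX', ite_mul, Finset.sum_ite_eq']
      have hresβ : sqResid X' y' β i0 = Y ^ 2 * (A - β j0) ^ 2 := by
        simp [sqResid, hy', hsumβ']
        ring
      have hlower : Y ^ 2 * (A - β j0) ^ 2 ≤ ∑ i, sqResid X' y' β i := by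
        rw [← hresβ]
        exact Finset.single_le_sum (f := fun i => sqResid X' y' β i) (fun i _ => sq_nonneg _) (Finset.mem_univ i0)
      have hchain : Y ^ 2 * (A - β j0) ^ 2 < Y ^ 2 * 1 := by
        rw [mul_one]
        exact lt_of_le_of_lt (le_trans hlower (le_trans hmin hupper)) hCY
      have hlt1 : (A - β j0) ^ 2 < 1 :=
        (mul_lt_mul_iff_right₀ (by positivity)).mp hchain
      have hβj0 : max M 0 < β j0 := by nlinarith [sq_nonneg (A - β j0)]
      have hMβ : M < β j0 := lt_of_le_of_lt (le_max_left M 0) hβj0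
      have henorm : β j0 ≤ euclNorm β := by
        have h1 : (β j0) ^ 2 ≤ ∑ j, (β j) ^ 2 :=
          Finset.single_le_sum (f := fun j => (β j) ^ 2) (fun j _ => sq_nonneg _) (Finset.mem_univ j0)
        calc β j0 ≤ |β j0| := le_abs_self _
          _ = Real.sqrt ((β j0) ^ 2) := (Real.sqrt_sq_eq_abs _).symm
          _ ≤ euclNorm β := Real.sqrt_le_sqrt h1
      exact lt_of_lt_of_le hMβ henorm
  -- now compute the sInf
  have h1mem : 1 ∈ {m : ℕ | 1 ≤ m ∧ m ≤ n ∧ BreaksAt T X y m} :=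
    ⟨le_refl 1, hn, hbreak⟩
  have hle : sInf {m : ℕ | 1 ≤ m ∧ m ≤ n ∧ BreaksAt T X y m} ≤ 1 := Nat.sInf_le h1mem
  have hge : 1 ≤ sInf {m : ℕ | 1 ≤ m ∧ m ≤ n ∧ BreaksAt T X y m} := by
    rw [Nat.one_le_iff_ne_zero]
    intro h0
    have := Nat.sInf_mem (⟨1, h1mem⟩ : {m : ℕ | 1 ≤ m ∧ m ≤ n ∧ BreaksAt T X y m}.Nonempty)
    rw [h0] at this
    exact absurd this.1 (by omega)
  have : sInf {m : ℕ | 1 ≤ m ∧ m ≤ n ∧ BreaksAt T X y m} = 1 := le_antisymm hle hge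
  rw [fsbp, this]
  norm_num


end
end
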